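/- arXiv:2310.03471 — 5 statements merged into one kernel-verified Lean document; each statement's English description precedes it below -/
import Mathlib

section
/- For every ε ∈ (0, √2/2), the infimum over all infinitely divisible real random variables X with E[X²] < ∞ of P{|X − E[X]| ≤ ε·√(Var(X))} equals 0. -/
/-!
The Poisson law of rate `1/2` is infinitely divisible (`Po(r/n)^{∗n} = Po(r)`), has mean and
variance `1/2`, and is carried by `ℕ`, every point of which lies at distance at least `1/2` from
the mean. Since `ε √(1/2) < 1/2`, its concentration probability is `0`, which is therefore the
least element of the set of concentration probabilities.
-/

open MeasureTheory Real

/-- `n`-fold convolution power of a measure on `ℝ`; the `0`-fold convolution is `δ₀`. -/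
noncomputable def convPow (ν : Measure ℝ) : ℕ → Measure ℝ
  | 0 => Measure.dirac 0
  | n + 1 => (convPow ν n).conv ν

/-- A probability measure `μ` on `ℝ` is infinitely divisible if for every `n ≥ 1` it is
the `n`-fold convolution of some probability measure `ν`. -/
def InfinitelyDivisible (μ : Measure ℝ) : Prop :=
  ∀ n : ℕ, 0 < n → ∃ ν : Measure ℝ, IsProbabilityMeasure ν ∧ μ = convPow ν n

/-- The mean of a distribution on `ℝ`. -/
noncomputable def distMean (μ : Measure ℝ) : ℝ := ∫ x, x ∂μ

/-- The variance of a distribution on `ℝ`. -/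
noncomputable def distVar (μ : Measure ℝ) : ℝ := ∫ x, (x - distMean μ) ^ 2 ∂μ

open ProbabilityTheory
open scoped NNReal Nat

section PoissonMoments

variable (r : ℝ)

lemma poisson_weight_succ_mul (n : ℕ) :
    exp (-r) * r ^ (n + 1) / (n + 1)! * (n + 1 : ℕ) = r * (exp (-r) * r ^ n / n !) := by
  rw [Nat.factorial_succ]
  push_cast
  field_simp
  ring

lemma hasSum_poisson_weight_mul_natCast_mul {g : ℕ → ℝ} {s : ℝ}
    (h : HasSum (fun n : ℕ ↦ exp (-r) * r ^ n / n ! * g (n + 1)) s) :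
    HasSum (fun n : ℕ ↦ exp (-r) * r ^ n / n ! * (n * g n)) (r * s) := by
  rw [← hasSum_nat_add_iff' 1]
  simp only [Finset.range_one, Finset.sum_singleton, CharP.cast_eq_zero, zero_mul, mul_zero,
    sub_zero]
  refine (h.mul_left r).congr_fun fun n ↦ ?_
  rw [← mul_assoc, poisson_weight_succ_mul, mul_assoc]

end PoissonMoments

section PoissonMeasure

variable (r : ℝ≥0)

lemma hasSum_poisson_weight_mul_natCast :
    HasSum (fun n : ℕ ↦ exp (-r) * r ^ n / n ! * n) r := by
  simpa only [mul_one] using hasSum_poisson_weight_mul_natCast_mul r (g := fun _ ↦ 1) (s := 1)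
    (by simpa only [mul_one] using hasSum_one_poissonMeasure r)

lemma hasSum_poisson_weight_mul_natCast_mul_sub_one :
    HasSum (fun n : ℕ ↦ exp (-r) * r ^ n / n ! * (n * (n - 1))) (r ^ 2) := by
  simpa [sq] using hasSum_poisson_weight_mul_natCast_mul r (g := fun n ↦ (n : ℝ) - 1) (s := r)
    (by simpa using hasSum_poisson_weight_mul_natCast r)

lemma hasSum_poisson_weight_mul_sq_sub :
    HasSum (fun n : ℕ ↦ exp (-r) * r ^ n / n ! * ((n : ℝ) - r) ^ 2) r := by
  have h := ((hasSum_poisson_weight_mul_natCast_mul_sub_one r).add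
    ((hasSum_poisson_weight_mul_natCast r).mul_left (1 - 2 * r : ℝ))).add
    ((hasSum_one_poissonMeasure r).mul_left ((r : ℝ) ^ 2))
  convert h using 1
  · ext n; ring
  · ring

lemma distMean_map_cast_poissonMeasure : distMean Po(ℝ, r) = r := by
  rw [distMean, integral_map .of_discrete (by fun_prop), integral_poissonMeasure]
  exact (hasSum_poisson_weight_mul_natCast r).tsum_eq

lemma distVar_map_cast_poissonMeasure : distVar Po(ℝ, r) = r := by
  rw [distVar, distMean_map_cast_poissonMeasure, integral_map .of_discrete (by fun_prop),
    integral_poissonMeasure]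
  exact (hasSum_poisson_weight_mul_sq_sub r).tsum_eq

lemma integrable_sq_map_cast_poissonMeasure : Integrable (fun x : ℝ ↦ x ^ 2) Po(ℝ, r) := by
  rw [integrable_map_measure (by fun_prop) .of_discrete, integrable_poissonMeasure_iff]
  have h := (hasSum_poisson_weight_mul_natCast_mul_sub_one r).add
    (hasSum_poisson_weight_mul_natCast r)
  refine h.summable.congr fun n ↦ ?_
  simp only [Function.comp_apply, norm_pow, Real.norm_natCast]
  ring

lemma poissonMeasure_zero : Po(0) = Measure.dirac 0 := by
  refine Measure.ext_iff_singleton.mpr fun n ↦ ?_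
  rw [poissonMeasure_singleton, Measure.dirac_apply]
  rcases n with _ | n <;> simp

lemma convPow_map_cast_poissonMeasure (n : ℕ) : convPow Po(ℝ, r) n = Po(ℝ, n * r) := by
  induction n with
  | zero => simp [convPow, poissonMeasure_zero]
  | succ n ih => rw [convPow, ih, map_cast_poissonMeasure_conv]; push_cast; ring_nf

lemma infinitelyDivisible_map_cast_poissonMeasure : InfinitelyDivisible Po(ℝ, r) := by
  intro n hn
  refine ⟨Po(ℝ, r / n), inferInstance, ?_⟩
  rw [convPow_map_cast_poissonMeasure, mul_div_cancel₀ _ (by exact_mod_cast hn.ne')]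

end PoissonMeasure

lemma map_natCast_apply_eq_zero_of_forall_notMem (μ : Measure ℕ) {s : Set ℝ}
    (h : ∀ n : ℕ, (n : ℝ) ∉ s) :
    μ.map ((↑) : ℕ → ℝ) s = 0 := by
  refine measure_mono_null (t := (Set.range ((↑) : ℕ → ℝ))ᶜ)
    (fun x hx ⟨n, hn⟩ ↦ h n (hn ▸ hx)) ?_
  rw [Measure.map_apply (by fun_prop) (Set.countable_range _).measurableSet.compl]
  simp

lemma inv_two_le_abs_natCast_sub_inv_two (n : ℕ) : (2⁻¹ : ℝ) ≤ |(n : ℝ) - 2⁻¹| := by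
  rcases n with _ | n
  · norm_num
  · rw [le_abs]
    left
    push_cast
    linarith [n.cast_nonneg (α := ℝ)]

theorem inf_eps_concentration_eq_zero (ε : ℝ) (hε : ε ∈ Set.Ioo 0 (Real.sqrt 2 / 2)) :
    sInf {r : ℝ | ∃ μ : Measure ℝ, IsProbabilityMeasure μ ∧ InfinitelyDivisible μ ∧
      Integrable (fun x => x ^ 2) μ ∧
      r = (μ {x : ℝ | |x - distMean μ| ≤ ε * Real.sqrt (distVar μ)}).toReal} = 0 := by
  have hradius : ε * √2⁻¹ < 2⁻¹ := by
    have h2 : √2 * √2 = 2 := mul_self_sqrt zero_le_two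
    rw [sqrt_inv, ← div_eq_mul_inv, div_lt_iff₀ (by positivity)]
    linarith [hε.2]
  have hnull :
      Po(ℝ, 2⁻¹) {x | |x - distMean Po(ℝ, 2⁻¹)| ≤ ε * √(distVar Po(ℝ, 2⁻¹))} = 0 := by
    rw [distMean_map_cast_poissonMeasure, distVar_map_cast_poissonMeasure]
    refine map_natCast_apply_eq_zero_of_forall_notMem _ fun n hn ↦ ?_
    have := inv_two_le_abs_natCast_sub_inv_two n
    simp only [NNReal.coe_inv, NNReal.coe_ofNat, Set.mem_ofPred_eq] at hn
    linarith
  refine IsLeast.csInf_eq ⟨⟨Po(ℝ, 2⁻¹), inferInstance,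
    infinitelyDivisible_map_cast_poissonMeasure _, integrable_sq_map_cast_poissonMeasure _,
    by rw [hnull, ENNReal.toReal_zero]⟩, ?_⟩
  rintro _ ⟨μ, -, -, -, rfl⟩
  exact ENNReal.toReal_nonneg
end

section
/- For geometric random variables X_p with parameter p ∈ (0,1), one has inf_{p ∈ (0,1)} P{|X_p − E[X_p]| ≤ √(Var(X_p))} = inf_{p ∈ (0,1)} P{|X_p − E[X_p]| < √(Var(X_p))} = 3/4; moreover the second infimum is attained at p = 3/4, where P{|X_{3/4} − E[X_{3/4}]| < √(Var(X_{3/4}))} = 3/4. -/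
/-!
Write `q = 1 - p`. Multiplying through by `p`, the event `|X_p - 𝔼 X_p| < √Var X_p` becomes
`k p < q + √q`, i.e. `X_p < n := ⌈(q + √q) / p⌉`, an event of probability `1 - q ^ n`.
With `t = √q` one has `(q + √q) / p = t / (1 - t)`, so `t ≤ n / (n + 1)`, and Bernoulli's
inequality `(1 + 1 / n) ^ n ≥ 2` gives `q ^ n = (t ^ n) ^ 2 ≤ 1 / 4`, with equality at
`p = 3 / 4`, `n = 1`. For `p > 3 / 4` the closed event is `{X_p = 0}`, of probability `p`,
so letting `p ↓ 3 / 4` shows that the closed infimum is `3 / 4` as well.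
-/

open MeasureTheory Real ProbabilityTheory Set

lemma div_add_one_pow_le_half {n : ℕ} (hn : n ≠ 0) : ((n : ℝ) / (n + 1)) ^ n ≤ 1 / 2 := by
  have hn' : (0 : ℝ) < n := by positivity
  have bernoulli : 1 + n * (1 / n : ℝ) ≤ (1 + 1 / n) ^ n :=
    one_add_mul_le_pow (by linarith [show (0 : ℝ) ≤ 1 / n by positivity]) n
  rw [mul_one_div_cancel hn'.ne', one_add_one_eq_two] at bernoulli
  rw [show (n : ℝ) / (n + 1) = 1 / (1 + 1 / n) by field_simp, div_pow, one_pow]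
  exact one_div_le_one_div_of_le two_pos bernoulli

lemma pow_le_quarter_of_add_sqrt_div_le {q : ℝ} (hq0 : 0 < q) (hq1 : q < 1) {n : ℕ}
    (hn : (q + √q) / (1 - q) ≤ n) : q ^ n ≤ 1 / 4 := by
  set t := √q
  have ht0 : 0 < t := sqrt_pos.mpr hq0
  have htq : t ^ 2 = q := sq_sqrt hq0.le
  have ht1 : t < 1 := by nlinarith
  -- `(q + √q) / (1 - q) = t / (1 - t)`
  have htn : t ≤ n / (n + 1) := by
    rw [div_le_iff₀ (by linarith)] at hn
    rw [le_div_iff₀ (by positivity)]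
    nlinarith
  have hn0 : n ≠ 0 := by
    rintro rfl
    rw [Nat.cast_zero, zero_div] at htn
    linarith
  calc q ^ n = (t ^ n) ^ 2 := by rw [← htq, ← pow_mul, ← pow_mul, mul_comm]
    _ ≤ (((n : ℝ) / (n + 1)) ^ n) ^ 2 := by gcongr
    _ ≤ (1 / 2) ^ 2 := by gcongr; exact div_add_one_pow_le_half hn0
    _ = 1 / 4 := by norm_num

namespace ProbabilityTheory

lemma abs_sub_geometric_mean_eq {p : ℝ} (hp : 0 < p) (x : ℝ) :
    |x - (1 / p - 1)| = |x * p - (1 - p)| / p := by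
  rw [← abs_of_pos hp, ← abs_div, abs_of_pos hp]
  congr 1
  field_simp

lemma sqrt_geometric_variance {p : ℝ} (hp : 0 < p) : √((1 - p) / p ^ 2) = √(1 - p) / p := by
  rw [sqrt_div' _ (sq_nonneg p), sqrt_sq hp.le]

lemma abs_sub_geometric_mean_lt_iff {p : ℝ} (hp : 0 < p) (x : ℝ) :
    |x - (1 / p - 1)| < √((1 - p) / p ^ 2) ↔ |x * p - (1 - p)| < √(1 - p) := by
  rw [abs_sub_geometric_mean_eq hp, sqrt_geometric_variance hp,
    div_lt_div_iff_of_pos_right hp]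

lemma abs_sub_geometric_mean_le_iff {p : ℝ} (hp : 0 < p) (x : ℝ) :
    |x - (1 / p - 1)| ≤ √((1 - p) / p ^ 2) ↔ |x * p - (1 - p)| ≤ √(1 - p) := by
  rw [abs_sub_geometric_mean_eq hp, sqrt_geometric_variance hp,
    div_le_div_iff_of_pos_right hp]

lemma geometric_strict_event_eq_Iio {p : ℝ} (hp0 : 0 < p) (hp1 : p < 1) :
    {k : ℕ | |(k : ℝ) - (1 / p - 1)| < √((1 - p) / p ^ 2)} =
      Iio ⌈(1 - p + √(1 - p)) / p⌉₊ := by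
  have hq : 1 - p < √(1 - p) := lt_sqrt_self_iff.mpr ⟨by linarith, by linarith⟩
  ext k
  have hk : (0 : ℝ) ≤ k * p := by positivity
  simp only [mem_ofPred_eq, mem_Iio, Nat.lt_ceil, lt_div_iff₀ hp0,
    abs_sub_geometric_mean_lt_iff hp0, abs_lt]
  exact ⟨fun h ↦ by linarith [h.2], fun h ↦ ⟨by linarith, by linarith⟩⟩

lemma geometric_closed_event_eq_singleton_zero {p : ℝ} (hp : 3 / 4 < p) (hp1 : p < 1) :
    {k : ℕ | |(k : ℝ) - (1 / p - 1)| ≤ √((1 - p) / p ^ 2)} = {0} := by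
  have hp0 : 0 < p := by linarith
  have hq : 1 - p < √(1 - p) := lt_sqrt_self_iff.mpr ⟨by linarith, by linarith⟩
  -- `3 / 4` is exactly where `√(1 - p) < 2 p - 1 = p - (1 - p)` starts to hold
  have hsqrt : √(1 - p) < 2 * p - 1 := (sqrt_lt' (by linarith)).mpr (by nlinarith)
  ext k
  simp only [mem_ofPred_eq, mem_singleton_iff, abs_sub_geometric_mean_le_iff hp0, abs_le]
  refine ⟨fun h ↦ ?_, fun h ↦ ?_⟩
  · by_contra hk
    have hk1 : (1 : ℝ) ≤ k := by exact_mod_cast Nat.one_le_iff_ne_zero.mpr hk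
    nlinarith [h.2]
  · subst h
    constructor <;> push_cast <;> linarith

lemma geometricMeasure_real_Iio {p : unitInterval} (hp : p ≠ 0) (n : ℕ) :
    (geometricMeasure p).real (Iio n) = 1 - (1 - p) ^ n := by
  rw [← geom_sum_mul_neg, sub_sub_cancel, Finset.sum_mul, ← Finset.coe_range,
    ← sum_measureReal_singleton]
  exact Finset.sum_congr rfl fun k _ ↦ geometricMeasure_real_singleton hp k

lemma three_quarters_le_geometricMeasure_real_strict_event {p : ℝ} (hp0 : 0 < p)
    (hp1 : p < 1) :
    3 / 4 ≤ (geometricMeasure ⟨p, hp0.le, hp1.le⟩).real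
      {k : ℕ | |(k : ℝ) - (1 / p - 1)| < √((1 - p) / p ^ 2)} := by
  rw [geometric_strict_event_eq_Iio hp0 hp1,
    geometricMeasure_real_Iio (Subtype.coe_ne_coe.mp hp0.ne')]
  have := pow_le_quarter_of_add_sqrt_div_le (q := 1 - p) (by linarith) (by linarith)
    (n := ⌈(1 - p + √(1 - p)) / p⌉₊) (by rw [sub_sub_cancel]; exact Nat.le_ceil _)
  linarith

lemma geometricMeasure_real_closed_event {p : ℝ} (hp : 3 / 4 < p) (hp1 : p < 1) :
    (geometricMeasure ⟨p, by linarith, hp1.le⟩).real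
      {k : ℕ | |(k : ℝ) - (1 / p - 1)| ≤ √((1 - p) / p ^ 2)} = p := by
  rw [geometric_closed_event_eq_singleton_zero hp hp1,
    geometricMeasure_real_singleton (Subtype.coe_ne_coe.mp (by linarith : (0 : ℝ) < p).ne')]
  simp

lemma geometricMeasure_real_strict_event_three_quarters :
    (geometricMeasure ⟨3 / 4, by norm_num, by norm_num⟩).real
      {k : ℕ | |(k : ℝ) - (1 / (3 / 4) - 1)| < √((1 - 3 / 4) / (3 / 4 : ℝ) ^ 2)} =
      3 / 4 := by
  rw [geometric_strict_event_eq_Iio (by norm_num) (by norm_num),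
    geometricMeasure_real_Iio (Subtype.coe_ne_coe.mp (by norm_num)),
    show √(1 - 3 / 4 : ℝ) = 1 / 2 by rw [sqrt_eq_iff_mul_self_eq] <;> norm_num]
  norm_num

end ProbabilityTheory

theorem geometric_inf_concentration :
    sInf {r : ℝ | ∃ (p : ℝ) (h0 : 0 < p) (h1 : p < 1),
        r = (geometricMeasure ⟨p, ⟨h0.le, h1.le⟩⟩
          {k : ℕ | |(k : ℝ) - (1 / p - 1)| ≤ Real.sqrt ((1 - p) / p ^ 2)}).toReal} = 3 / 4 ∧
    sInf {r : ℝ | ∃ (p : ℝ) (h0 : 0 < p) (h1 : p < 1),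
        r = (geometricMeasure ⟨p, ⟨h0.le, h1.le⟩⟩
          {k : ℕ | |(k : ℝ) - (1 / p - 1)| < Real.sqrt ((1 - p) / p ^ 2)}).toReal} = 3 / 4 ∧
    (geometricMeasure ⟨(3 / 4 : ℝ), ⟨by norm_num, by norm_num⟩⟩
        {k : ℕ | |(k : ℝ) - (1 / (3 / 4) - 1)| <
          Real.sqrt ((1 - 3 / 4) / (3 / 4 : ℝ) ^ 2)}).toReal = 3 / 4 := by
  simp only [← measureReal_def]
  refine ⟨?_, ?_, geometricMeasure_real_strict_event_three_quarters⟩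
  · refine IsGLB.csInf_eq ?_ ⟨7 / 8, 7 / 8, by norm_num, by norm_num,
      (geometricMeasure_real_closed_event (by norm_num) (by norm_num)).symm⟩
    refine (isGLB_Ioo (show (3 / 4 : ℝ) < 1 by norm_num)).of_subset_of_superset isGLB_Ici ?_ ?_
    · rintro p ⟨hp, hp1⟩
      exact ⟨p, by linarith, hp1, (geometricMeasure_real_closed_event hp hp1).symm⟩
    · rintro r ⟨p, hp0, hp1, rfl⟩
      exact (three_quarters_le_geometricMeasure_real_strict_event hp0 hp1).trans
        (measureReal_mono (ofPred_subset_ofPred.mpr fun _ ↦ le_of_lt))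
  · exact IsLeast.csInf_eq ⟨⟨3 / 4, by norm_num, by norm_num,
      geometricMeasure_real_strict_event_three_quarters.symm⟩,
      fun r ⟨p, hp0, hp1, hr⟩ ↦
        hr ▸ three_quarters_le_geometricMeasure_real_strict_event hp0 hp1⟩
end

section
/- For symmetric geometric random variables X^S_p with parameter p ∈ (0,1), one has inf_{p ∈ (0,1)} P{|X^S_p − E[X^S_p]| ≤ √(Var(X^S_p))} = inf_{p ∈ (0,1)} P{|X^S_p − E[X^S_p]| < √(Var(X^S_p))} = √3/3; moreover the second infimum is attained at p = √3 − 1, where P{|X^S_{√3−1}| < 1} = √3/3. -/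
open MeasureTheory Real ProbabilityTheory

/-- The law of the difference of two independent geometric random variables with
the same parameter `p`. -/
noncomputable def symmGeometricMeasure {p : ℝ} (h0 : 0 < p) (h1 : p ≤ 1) : Measure ℤ :=
  ((geometricMeasure ⟨p, h0.le, h1⟩).prod (geometricMeasure ⟨p, h0.le, h1⟩)).map
    (fun x : ℕ × ℕ => (x.1 : ℤ) - (x.2 : ℤ))

/-!
A point mass computation gives `P{X = k} = p q^|k| / (2 - p)` with `q = 1 - p`, hence
`P{|X| ≤ n} = 1 - 2 q^(n+1) / (1 + q)`. Both windows `|X| ≤ σ` and `|X| < σ` are of the form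
`|X| ≤ n` with `σ ≤ n + 1`, i.e. `√(2q) ≤ (n + 1)(1 - q)`, and under this constraint
`2 q^(n+1) / (1 + q) ≤ 1 - √3/3`: for `q ≤ 2 - √3` since `q^(n+1) ≤ q`, and otherwise by the
Bernoulli bound `q^n (q + n(1 - q)) ≤ q`, which reduces the claim to a polynomial inequality in
`s = √(2q)` that is tight exactly at `s = √3 - 1`.

At `p = √3 - 1` one has `σ = 1`, so the open window is `{0}`, of mass `p / (2 - p) = √3/3`.
For `p` slightly larger `σ < 1`, so the closed window is `{0}` as well and its mass
`p / (2 - p)` decreases to `√3/3` as `p ↓ √3 - 1`.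
-/

open Filter Topology

variable {p : ℝ}

lemma tsum_geometricMeasure_add_mul (h0 : 0 < p) (h1 : p ≤ 1) (m : ℕ) :
    ∑' a : ℕ, geometricMeasure ⟨p, h0.le, h1⟩ {a + m} * geometricMeasure ⟨p, h0.le, h1⟩ {a} =
      ENNReal.ofReal (p * (1 - p) ^ m / (2 - p)) := by
  have hp : (⟨p, h0.le, h1⟩ : unitInterval) ≠ 0 := fun h => h0.ne' (congrArg Subtype.val h)
  have hterm (a : ℕ) :
      geometricMeasure ⟨p, h0.le, h1⟩ {a + m} * geometricMeasure ⟨p, h0.le, h1⟩ {a} =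
        ENNReal.ofReal ((1 - p) ^ m * p ^ 2 * ((1 - p) ^ 2) ^ a) := by
    rw [geometricMeasure_singleton hp, geometricMeasure_singleton hp,
      ← ENNReal.ofReal_mul (geometricMeasure_nonneg _ _), ← pow_mul]
    congr 1
    ring
  have hsum : HasSum (fun a : ℕ => (1 - p) ^ m * p ^ 2 * ((1 - p) ^ 2) ^ a)
      (p * (1 - p) ^ m / (2 - p)) := by
    have hq : (1 - p) ^ 2 < 1 := by nlinarith
    have hsum_eq :
        p * (1 - p) ^ m / (2 - p) = (1 - p) ^ m * p ^ 2 * (1 - (1 - p) ^ 2)⁻¹ := by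
      have : 2 - p ≠ 0 := by linarith
      rw [show 1 - (1 - p) ^ 2 = p * (2 - p) by ring]
      field_simp
    rw [hsum_eq]
    exact (hasSum_geometric_of_lt_one (sq_nonneg _) hq).mul_left _
  simp_rw [hterm]
  rw [← ENNReal.ofReal_tsum_of_nonneg (fun a => by positivity) hsum.summable, hsum.tsum_eq]

lemma symmGeometricMeasure_singleton (h0 : 0 < p) (h1 : p ≤ 1) (k : ℤ) :
    symmGeometricMeasure h0 h1 {k} = ENNReal.ofReal (p * (1 - p) ^ k.natAbs / (2 - p)) := by
  have hmeas : Measurable fun x : ℕ × ℕ => (x.1 : ℤ) - x.2 := by fun_prop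
  rw [symmGeometricMeasure, Measure.map_apply hmeas (measurableSet_singleton k)]
  obtain ⟨m, rfl | rfl⟩ := Int.eq_nat_or_neg k
  · have hslice (b : ℕ) : (fun a : ℕ => (a, b)) ⁻¹'
        ((fun x : ℕ × ℕ => (x.1 : ℤ) - x.2) ⁻¹' {(m : ℤ)}) = {b + m} := by
      ext a; simp only [Set.mem_preimage, Set.mem_singleton_iff]; omega
    rw [Measure.prod_apply_symm (hmeas (measurableSet_singleton _)), lintegral_countable']
    simp_rw [hslice]
    rw [Int.natAbs_natCast, tsum_geometricMeasure_add_mul h0 h1]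
  · have hslice (a : ℕ) : Prod.mk a ⁻¹'
        ((fun x : ℕ × ℕ => (x.1 : ℤ) - x.2) ⁻¹' {-(m : ℤ)}) = {a + m} := by
      ext b; simp only [Set.mem_preimage, Set.mem_singleton_iff]; omega
    rw [Measure.prod_apply (hmeas (measurableSet_singleton _)), lintegral_countable']
    simp_rw [hslice]
    rw [Int.natAbs_neg, Int.natAbs_natCast, tsum_geometricMeasure_add_mul h0 h1]

instance (h0 : 0 < p) (h1 : p ≤ 1) : IsProbabilityMeasure (symmGeometricMeasure h0 h1) :=
  Measure.isProbabilityMeasure_map (by fun_prop)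

lemma symmGeometricMeasure_real_natAbs_le (h0 : 0 < p) (h1 : p ≤ 1) (n : ℕ) :
    (symmGeometricMeasure h0 h1).real {k : ℤ | k.natAbs ≤ n} =
      1 - 2 * (1 - p) ^ (n + 1) / (2 - p) := by
  have hp : 2 - p ≠ 0 := by linarith
  have hsingleton (k : ℤ) :
      (symmGeometricMeasure h0 h1).real {k} = p * (1 - p) ^ k.natAbs / (2 - p) := by
    rw [measureReal_def, symmGeometricMeasure_singleton,
      ENNReal.toReal_ofReal (div_nonneg (mul_nonneg h0.le (pow_nonneg (by linarith) _))
        (by linarith))]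
  induction n with
  | zero =>
    rw [show {k : ℤ | k.natAbs ≤ 0} = {0} by ext; simp, hsingleton]
    field_simp; ring
  | succ n ih =>
    have hsplit : {k : ℤ | k.natAbs ≤ n + 1} =
        {k : ℤ | k.natAbs ≤ n} ∪ ({((n + 1 : ℕ) : ℤ)} ∪ {-((n + 1 : ℕ) : ℤ)}) := by
      ext k; simp only [Set.mem_ofPred_eq, Set.mem_union, Set.mem_singleton_iff]; omega
    have hdisj :
        Disjoint {k : ℤ | k.natAbs ≤ n} ({((n + 1 : ℕ) : ℤ)} ∪ {-((n + 1 : ℕ) : ℤ)}) := by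
      rw [Set.disjoint_left]
      intro k hk
      simp only [Set.mem_ofPred_eq, Set.mem_union, Set.mem_singleton_iff] at hk ⊢
      omega
    have hdisj' : Disjoint ({((n + 1 : ℕ) : ℤ)} : Set ℤ) {-((n + 1 : ℕ) : ℤ)} := by
      rw [Set.disjoint_singleton]; omega
    rw [hsplit, measureReal_union hdisj (by measurability),
      measureReal_union hdisj' (measurableSet_singleton _), ih, hsingleton, hsingleton,
      Int.natAbs_neg, Int.natAbs_natCast]
    field_simp; ring

lemma symmGeometricMeasure_real_natAbs_le_zero (h0 : 0 < p) (h1 : p ≤ 1) :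
    (symmGeometricMeasure h0 h1).real {k : ℤ | k.natAbs ≤ 0} = p / (2 - p) := by
  have : 2 - p ≠ 0 := by linarith
  rw [symmGeometricMeasure_real_natAbs_le]
  field_simp
  ring

lemma pow_mul_add_mul_one_sub_le {q : ℝ} (hq0 : 0 ≤ q) (hq1 : q ≤ 1) (n : ℕ) :
    q ^ n * (q + n * (1 - q)) ≤ q := by
  induction n with
  | zero => simp
  | succ n ih =>
    have hpow : q ^ (n + 1) ≤ q := pow_le_of_le_one hq0 hq1 n.succ_ne_zero
    calc q ^ (n + 1) * (q + ↑(n + 1) * (1 - q))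
        = q * (q ^ n * (q + n * (1 - q))) + q ^ (n + 1) * (1 - q) := by push_cast; ring
      _ ≤ q * q + q * (1 - q) := by gcongr
      _ = q := by ring

lemma three_mul_pow_four_le {s : ℝ} (hs : √3 - 1 ≤ s) (hs2 : s ^ 2 ≤ 2) :
    3 * s ^ 4 ≤ (3 - √3) * (s ^ 2 + s - 1) * (2 + s ^ 2) := by
  have h3 : √3 ^ 2 = 3 := sq_sqrt (by norm_num)
  have h3lt : √3 < 9 / 5 := by nlinarith [sqrt_nonneg 3]
  have h3gt : 1 < √3 := by nlinarith [sqrt_nonneg 3]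
  have hs0 : 0 ≤ s := by linarith
  have hs32 : s < 3 / 2 := by nlinarith
  have hfactor : (3 - √3) * (s ^ 2 + s - 1) * (2 + s ^ 2) - 3 * s ^ 4 =
      (s - (√3 - 1)) * (2 * √3 + (3 - √3) * s - √3 * s ^ 3) := by
    linear_combination (-(s ^ 3 + s - 2)) * h3
  have hQ : 0 < 2 * √3 + (3 - √3) * s - √3 * s ^ 3 := by
    nlinarith [mul_nonneg (mul_nonneg (sqrt_nonneg 3) hs0) (by linarith : 0 ≤ 2 - s ^ 2),
      mul_nonneg (by nlinarith : 0 ≤ 3 * √3 - 3) (by linarith : 0 ≤ 3 / 2 - s)]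
  nlinarith [mul_nonneg (by linarith : 0 ≤ s - (√3 - 1)) hQ.le]

lemma two_mul_pow_succ_div_le {q : ℝ} (hq0 : 0 ≤ q) (hq1 : q < 1) {n : ℕ}
    (h : √(2 * q) ≤ (n + 1) * (1 - q)) : 2 * q ^ (n + 1) / (1 + q) ≤ 1 - √3 / 3 := by
  have h3 : √3 ^ 2 = 3 := sq_sqrt (by norm_num)
  rw [div_le_iff₀ (by linarith)]
  rcases le_or_gt q (2 - √3) with hq | hq
  · have hpow : q ^ (n + 1) ≤ q := pow_le_of_le_one hq0 hq1.le n.succ_ne_zero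
    nlinarith [sqrt_nonneg 3]
  · set s := √(2 * q) with hs_def
    have hs2 : s ^ 2 = 2 * q := sq_sqrt (by linarith)
    have hs : √3 - 1 < s := by
      rw [hs_def, lt_sqrt (by nlinarith [sqrt_nonneg 3])]; nlinarith
    have hE : 0 < s ^ 2 + s - 1 := by nlinarith
    have hD : s ^ 2 + s - 1 ≤ q + n * (1 - q) := by nlinarith
    have hbern := pow_mul_add_mul_one_sub_le hq0 hq1.le n
    have hpoly := three_mul_pow_four_le hs.le (by linarith)
    refine le_of_mul_le_mul_right ?_ hE
    calc 2 * q ^ (n + 1) * (s ^ 2 + s - 1)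
        = 2 * q * (q ^ n * (s ^ 2 + s - 1)) := by ring
      _ ≤ 2 * q * (q ^ n * (q + n * (1 - q))) := by gcongr
      _ ≤ 2 * q * q := by gcongr
      _ ≤ (1 - √3 / 3) * (1 + q) * (s ^ 2 + s - 1) := by
          -- `hpoly` after substituting `s ^ 2 = 2 * q`
          linear_combination (1 / 6) * hpoly +
            ((1 - √3 / 3) * (s ^ 2 + s - 1) - (s ^ 2 + 2 * q)) / 2 * hs2

lemma setOf_abs_le_eq_natAbs_le {t : ℝ} (ht : 0 ≤ t) :
    {k : ℤ | |(k : ℝ)| ≤ t} = {k : ℤ | k.natAbs ≤ ⌊t⌋₊} := by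
  ext k
  simp only [Set.mem_ofPred_eq, Nat.le_floor_iff ht, Nat.cast_natAbs, Int.cast_abs]

lemma setOf_abs_lt_eq_natAbs_le {t : ℝ} (ht : 0 < t) :
    {k : ℤ | |(k : ℝ)| < t} = {k : ℤ | k.natAbs ≤ ⌈t⌉₊ - 1} := by
  ext k
  simp only [Set.mem_ofPred_eq, Nat.le_sub_one_iff_lt (Nat.ceil_pos.2 ht), Nat.lt_ceil,
    Nat.cast_natAbs, Int.cast_abs]

lemma sqrt_three_div_three_le_symmGeometricMeasure_real (h0 : 0 < p) (h1 : p < 1) {n : ℕ}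
    (hn : √(2 * (1 - p) / p ^ 2) ≤ n + 1) :
    √3 / 3 ≤ (symmGeometricMeasure h0 h1.le).real {k : ℤ | k.natAbs ≤ n} := by
  rw [sqrt_div' _ (sq_nonneg p), sqrt_sq h0.le, div_le_iff₀ h0] at hn
  have := two_mul_pow_succ_div_le (q := 1 - p) (by linarith) (by linarith)
    (by rwa [sub_sub_cancel])
  rw [symmGeometricMeasure_real_natAbs_le, show 2 - p = 1 + (1 - p) by ring]
  linarith

lemma sqrt_three_div_three_le_symmGeometricMeasure_abs_le (h0 : 0 < p) (h1 : p < 1) :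
    √3 / 3 ≤
      (symmGeometricMeasure h0 h1.le {k : ℤ | |(k : ℝ)| ≤ √(2 * (1 - p) / p ^ 2)}).toReal := by
  rw [← measureReal_def, setOf_abs_le_eq_natAbs_le (sqrt_nonneg _)]
  exact sqrt_three_div_three_le_symmGeometricMeasure_real h0 h1 (Nat.lt_floor_add_one _).le

lemma sqrt_three_div_three_le_symmGeometricMeasure_abs_lt (h0 : 0 < p) (h1 : p < 1) :
    √3 / 3 ≤
      (symmGeometricMeasure h0 h1.le {k : ℤ | |(k : ℝ)| < √(2 * (1 - p) / p ^ 2)}).toReal := by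
  have hσ : 0 < √(2 * (1 - p) / p ^ 2) := sqrt_pos.2 (div_pos (by linarith) (by positivity))
  rw [← measureReal_def, setOf_abs_lt_eq_natAbs_le hσ]
  refine sqrt_three_div_three_le_symmGeometricMeasure_real h0 h1 ?_
  rw [Nat.cast_sub (Nat.ceil_pos.2 hσ), Nat.cast_one, sub_add_cancel]
  exact Nat.le_ceil _

lemma symmGeometricMeasure_abs_le_eq_of_lt (h0 : 0 < p) (h1 : p < 1) (hp : √3 - 1 < p) :
    (symmGeometricMeasure h0 h1.le {k : ℤ | |(k : ℝ)| ≤ √(2 * (1 - p) / p ^ 2)}).toReal =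
      p / (2 - p) := by
  have hσ : √(2 * (1 - p) / p ^ 2) < 1 := by
    rw [sqrt_lt' one_pos, one_pow, div_lt_one (by positivity)]
    nlinarith [sq_sqrt (show (0 : ℝ) ≤ 3 by norm_num), sqrt_nonneg 3]
  rw [← measureReal_def, setOf_abs_le_eq_natAbs_le (sqrt_nonneg _), Nat.floor_eq_zero.2 hσ,
    symmGeometricMeasure_real_natAbs_le_zero]

lemma sqrt_three_sub_one_div_two_sub : (√3 - 1) / (2 - (√3 - 1)) = √3 / 3 := by
  have h3 : √3 ^ 2 = 3 := sq_sqrt (by norm_num)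
  rw [div_eq_div_iff (by nlinarith [sqrt_nonneg 3]) (by norm_num)]
  linear_combination h3

theorem symm_geometric_inf_concentration :
    sInf {r : ℝ | ∃ (p : ℝ) (h0 : 0 < p) (h1 : p < 1),
        r = (symmGeometricMeasure h0 h1.le
          {k : ℤ | |(k : ℝ)| ≤ Real.sqrt (2 * (1 - p) / p ^ 2)}).toReal} =
      Real.sqrt 3 / 3 ∧
    sInf {r : ℝ | ∃ (p : ℝ) (h0 : 0 < p) (h1 : p < 1),
        r = (symmGeometricMeasure h0 h1.le
          {k : ℤ | |(k : ℝ)| < Real.sqrt (2 * (1 - p) / p ^ 2)}).toReal} =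
      Real.sqrt 3 / 3 ∧
    (symmGeometricMeasure
        (show (0 : ℝ) < Real.sqrt 3 - 1 by
          nlinarith [Real.sq_sqrt (show (0:ℝ) ≤ 3 by norm_num), Real.sqrt_nonneg 3])
        (show Real.sqrt 3 - 1 ≤ 1 by
          nlinarith [Real.sq_sqrt (show (0:ℝ) ≤ 3 by norm_num), Real.sqrt_nonneg 3])
        {k : ℤ | |(k : ℝ)| < 1}).toReal = Real.sqrt 3 / 3 := by
  have h3 : √3 ^ 2 = 3 := sq_sqrt (by norm_num)
  have h0 : 0 < √3 - 1 := by nlinarith [sqrt_nonneg 3]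
  have h1 : √3 - 1 < 1 := by nlinarith [sqrt_nonneg 3]
  have hσ : √(2 * (1 - (√3 - 1)) / (√3 - 1) ^ 2) = 1 := by
    rw [sqrt_eq_one, div_eq_one_iff_eq (by positivity)]
    linear_combination -h3
  have hval : (symmGeometricMeasure h0 h1.le {k : ℤ | |(k : ℝ)| < 1}).toReal = √3 / 3 := by
    rw [← measureReal_def, setOf_abs_lt_eq_natAbs_le one_pos, Nat.ceil_one, Nat.sub_self,
      symmGeometricMeasure_real_natAbs_le_zero, sqrt_three_sub_one_div_two_sub]
  refine ⟨IsGLB.csInf_eq ⟨?_, fun b hb => ?_⟩ ⟨_, _, h0, h1, rfl⟩,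
    IsLeast.csInf_eq ⟨⟨_, h0, h1, by rw [hσ, hval]⟩, ?_⟩, hval⟩
  · rintro _ ⟨p, hp0, hp1, rfl⟩
    exact sqrt_three_div_three_le_symmGeometricMeasure_abs_le hp0 hp1
  · have hlim : Tendsto (fun p => p / (2 - p)) (𝓝[>] (√3 - 1)) (𝓝 (√3 / 3)) := by
      rw [← sqrt_three_sub_one_div_two_sub]
      have : (2 : ℝ) - (√3 - 1) ≠ 0 := by linarith
      exact (continuousAt_id.div (continuousAt_const.sub continuousAt_id) this).tendsto.mono_left
        nhdsWithin_le_nhds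
    refine ge_of_tendsto hlim ?_
    filter_upwards [Ioo_mem_nhdsGT h1] with p hp
    have hp0 : 0 < p := h0.trans hp.1
    rw [← symmGeometricMeasure_abs_le_eq_of_lt hp0 hp.2 hp.1]
    exact hb ⟨p, hp0, hp.2, rfl⟩
  · rintro _ ⟨p, hp0, hp1, rfl⟩
    exact sqrt_three_div_three_le_symmGeometricMeasure_abs_lt hp0 hp1
end

section
/- Let P_𝓘 = inf over all infinitely divisible real random variables X with E[X²] < ∞ of P{|X − E[X]| ≤ √(Var(X))}. Then P_𝓘 ≤ e^{−1} · ∑_{k=0}^{∞} 1/(2^{2k}(k!)²). -/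
open MeasureTheory Real

/-!
The symmetric Poisson law `symmPoisson t`, the law of `N₁ - N₂` for independent `N₁, N₂` with
Poisson(`t`) law, is infinitely divisible (it is a convolution semigroup in `t`), centred, and has
variance `2t`. It lives on `ℤ`, so for `t < 1/2`, when its standard deviation `√(2t)` is below `1`,
the band `|x| ≤ √(2t)` only catches the atom at `0`, whose mass is
`∑ₙ (e^{-t} tⁿ/n!)² ≤ e^{-2t} ∑ₙ 1/(4ⁿ (n!)²)`. Letting `t ↑ 1/2` gives the bound.
-/

open ProbabilityTheory Filter Topology
open scoped NNReal Nat

namespace MeasureTheory.Measure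

section Neg

variable {G : Type*} [AddCommGroup G] [MeasurableSpace G] [MeasurableAdd₂ G] [MeasurableNeg G]

lemma neg_conv (μ ν : Measure G) [SFinite μ] [SFinite ν] : (μ ∗ ν).neg = μ.neg ∗ ν.neg :=
  map_conv_addMonoidHom (negAddMonoidHom : G →+ G) measurable_neg

instance isProbabilityMeasure_neg (μ : Measure G) [IsProbabilityMeasure μ] :
    IsProbabilityMeasure μ.neg :=
  isProbabilityMeasure_map (by fun_prop)

instance isNegInvariant_conv_neg (μ : Measure G) [SFinite μ] : (μ ∗ μ.neg).IsNegInvariant :=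
  ⟨by rw [neg_conv, Measure.neg_neg, conv_comm]⟩

end Neg

lemma prod_self_apply_diagonal {α : Type*} [MeasurableSpace α] [Countable α]
    [MeasurableSingletonClass α] (μ : Measure α) [SFinite μ] :
    μ.prod μ {p | p.1 = p.2} = ∑' a, μ {a} ^ 2 := by
  rw [prod_apply (.of_discrete), lintegral_countable']
  refine tsum_congr fun a => ?_
  rw [sq]
  congr 2
  ext b
  simp [eq_comm]

end MeasureTheory.Measure

lemma convPow_succ_of_conv_eq_add (μ : ℝ≥0 → Measure ℝ) [∀ t, SFinite (μ t)]
    (hμ : ∀ a b, μ a ∗ μ b = μ (a + b)) (t : ℝ≥0) (n : ℕ) :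
    convPow (μ t) (n + 1) = μ ((n + 1) * t) := by
  induction n with
  | zero => simp [convPow, Measure.dirac_zero_conv]
  | succ n ih =>
    rw [convPow, ih, hμ]
    congr 1
    push_cast
    ring

lemma infinitelyDivisible_of_conv_eq_add (μ : ℝ≥0 → Measure ℝ) [∀ t, IsProbabilityMeasure (μ t)]
    (hμ : ∀ a b, μ a ∗ μ b = μ (a + b)) (t : ℝ≥0) : InfinitelyDivisible (μ t) := by
  intro n hn
  obtain ⟨m, rfl⟩ := Nat.exists_eq_add_one_of_ne_zero hn.ne'
  refine ⟨μ (t / (m + 1)), inferInstance, ?_⟩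
  rw [convPow_succ_of_conv_eq_add μ hμ, mul_div_cancel₀ _ (by positivity)]

lemma integral_id_eq_zero_of_isNegInvariant (μ : Measure ℝ) [μ.IsNegInvariant] :
    ∫ x, x ∂μ = 0 := by
  have h := integral_neg_eq_self (fun x : ℝ => x) μ
  rw [integral_neg] at h
  linarith

lemma distVar_eq_variance (μ : Measure ℝ) : distVar μ = Var[id; μ] :=
  (variance_eq_integral aemeasurable_id).symm

section Moments

variable {μ ν : Measure ℝ} [IsProbabilityMeasure μ] [IsProbabilityMeasure ν]

lemma memLp_id_conv (hμ : MemLp id 2 μ) (hν : MemLp id 2 ν) : MemLp id 2 (μ ∗ ν) :=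
  (memLp_map_measure_iff aestronglyMeasurable_id (by fun_prop)).mpr
    ((hμ.comp_fst ν).add (hν.comp_snd μ))

lemma variance_id_conv (hμ : MemLp id 2 μ) (hν : MemLp id 2 ν) :
    Var[id; μ ∗ ν] = Var[id; μ] + Var[id; ν] := by
  rw [Measure.conv, variance_id_map (by fun_prop)]
  exact variance_add_prod (X := id) (Y := id) hμ hν

end Moments

lemma memLp_id_neg {μ : Measure ℝ} (hμ : MemLp id 2 μ) : MemLp id 2 μ.neg :=
  (memLp_map_measure_iff aestronglyMeasurable_id measurable_neg.aemeasurable).mpr hμ.neg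

lemma variance_id_neg {μ : Measure ℝ} : Var[id; μ.neg] = Var[id; μ] := by
  rw [Measure.neg, variance_id_map measurable_neg.aemeasurable]
  exact variance_neg

section Poisson

variable (t : ℝ≥0)

-- The Poisson weights satisfy `(n + 1) pₙ₊₁ = t pₙ`.
lemma hasSum_poisson_mul_natCast_mul {f : ℕ → ℝ} {s : ℝ}
    (h : HasSum (fun n => exp (-t) * t ^ n / n ! * f (n + 1)) s) :
    HasSum (fun n => exp (-t) * t ^ n / n ! * (n * f n)) (t * s) := by
  have shift (n : ℕ) : exp (-t) * t ^ (n + 1) / (n + 1)! * ((n + 1 : ℕ) * f (n + 1)) =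
      t * (exp (-t) * t ^ n / n ! * f (n + 1)) := by
    push_cast [Nat.factorial_succ, pow_succ]
    field_simp
  rw [← hasSum_nat_add_iff' 1]
  simpa only [shift, Finset.sum_range_one, CharP.cast_eq_zero, zero_mul, mul_zero, sub_zero]
    using h.mul_left (t : ℝ)

lemma hasSum_poisson_natCast : HasSum (fun n => exp (-t) * t ^ n / n ! * n) t := by
  simpa using hasSum_poisson_mul_natCast_mul t (f := fun _ => 1) (s := 1)
    (by simpa using hasSum_one_poissonMeasure t)

lemma hasSum_poisson_natCast_sq :
    HasSum (fun n => exp (-t) * t ^ n / n ! * (n : ℝ) ^ 2) (t * (t + 1)) := by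
  have h := (hasSum_poisson_natCast t).add (hasSum_one_poissonMeasure t)
  simp_rw [← mul_add_one] at h
  simpa [sq] using hasSum_poisson_mul_natCast_mul t (f := fun n => (n : ℝ)) (by simpa using h)

lemma memLp_id_poisson : MemLp id 2 Po(ℝ, t) := by
  rw [memLp_two_iff_integrable_sq aestronglyMeasurable_id,
    integrable_map_measure (by fun_prop) (by fun_prop), integrable_poissonMeasure_iff]
  simpa using (hasSum_poisson_natCast_sq t).summable

lemma variance_id_poisson : Var[id; Po(ℝ, t)] = t := by
  rw [variance_eq_sub (memLp_id_poisson t), integral_map (by fun_prop) (by fun_prop),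
    integral_map (by fun_prop) (by fun_prop), integral_poissonMeasure, integral_poissonMeasure]
  simp only [Pi.pow_apply, id, smul_eq_mul]
  rw [(hasSum_poisson_natCast_sq t).tsum_eq, (hasSum_poisson_natCast t).tsum_eq]
  ring

end Poisson

noncomputable def symmPoisson (t : ℝ≥0) : Measure ℝ := Po(ℝ, t) ∗ Po(ℝ, t).neg

section SymmPoisson

variable (t : ℝ≥0)

instance : IsProbabilityMeasure (symmPoisson t) :=
  inferInstanceAs (IsProbabilityMeasure (Po(ℝ, t) ∗ Po(ℝ, t).neg))

instance : (symmPoisson t).IsNegInvariant :=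
  inferInstanceAs (Po(ℝ, t) ∗ Po(ℝ, t).neg).IsNegInvariant

lemma symmPoisson_conv_symmPoisson (a b : ℝ≥0) :
    symmPoisson a ∗ symmPoisson b = symmPoisson (a + b) := by
  simp only [symmPoisson]
  rw [Measure.conv_assoc, ← Measure.conv_assoc Po(ℝ, a).neg, Measure.conv_comm Po(ℝ, a).neg,
    Measure.conv_assoc, ← Measure.conv_assoc, ← Measure.neg_conv, map_cast_poissonMeasure_conv]

lemma infinitelyDivisible_symmPoisson : InfinitelyDivisible (symmPoisson t) :=
  infinitelyDivisible_of_conv_eq_add symmPoisson symmPoisson_conv_symmPoisson t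

lemma memLp_id_symmPoisson : MemLp id 2 (symmPoisson t) :=
  memLp_id_conv (memLp_id_poisson t) (memLp_id_neg (memLp_id_poisson t))

lemma distMean_symmPoisson : distMean (symmPoisson t) = 0 :=
  integral_id_eq_zero_of_isNegInvariant _

lemma distVar_symmPoisson : distVar (symmPoisson t) = 2 * t := by
  rw [distVar_eq_variance, symmPoisson, variance_id_conv (memLp_id_poisson t)
    (memLp_id_neg (memLp_id_poisson t)), variance_id_neg, variance_id_poisson]
  ring

lemma symmPoisson_eq_map_prod :
    symmPoisson t =
      ((poissonMeasure t).prod (poissonMeasure t)).map (fun p => (p.1 : ℝ) - p.2) := by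
  rw [symmPoisson, Measure.neg, Measure.map_map (by fun_prop) (by fun_prop), Measure.conv,
    Measure.map_prod_map _ _ (by fun_prop) (by fun_prop),
    Measure.map_map (by fun_prop) (by fun_prop)]
  rfl

lemma symmPoisson_real_abs_le {r : ℝ} (hr0 : 0 ≤ r) (hr1 : r < 1) :
    (symmPoisson t).real {x | |x| ≤ r} = ∑' n, (exp (-t) * t ^ n / n !) ^ 2 := by
  have diag : (fun p : ℕ × ℕ => (p.1 : ℝ) - p.2) ⁻¹' {x | |x| ≤ r} = {p | p.1 = p.2} := by
    ext ⟨a, b⟩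
    simp only [Set.mem_preimage, Set.mem_ofPred_eq]
    constructor
    · intro h
      have : |((a - b : ℤ) : ℝ)| < 1 := by push_cast; exact h.trans_lt hr1
      have : (a - b : ℤ) = 0 := Int.abs_lt_one_iff.mp (by exact_mod_cast this)
      omega
    · rintro rfl
      simpa using hr0
  rw [measureReal_def, symmPoisson_eq_map_prod, Measure.map_apply (by fun_prop)
    (measurableSet_le continuous_abs.measurable measurable_const), diag,
    Measure.prod_self_apply_diagonal, ENNReal.tsum_toReal_eq (fun _ => by finiteness)]
  congr! with n
  rw [ENNReal.toReal_pow, ← measureReal_def, poissonMeasure_real_singleton]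

variable {t}

lemma symmPoisson_abs_sub_distMean_le_sqrt_distVar (ht : (t : ℝ) < 1 / 2) :
    (symmPoisson t {x | |x - distMean (symmPoisson t)| ≤ √(distVar (symmPoisson t))}).toReal =
      ∑' n, (exp (-t) * t ^ n / n !) ^ 2 := by
  rw [distMean_symmPoisson, distVar_symmPoisson]
  simp only [sub_zero]
  exact symmPoisson_real_abs_le t (sqrt_nonneg _) ((sqrt_lt' one_pos).mpr (by linarith))

end SymmPoisson

lemma summable_one_div_two_pow_mul_factorial_sq :
    Summable fun k : ℕ => 1 / (2 ^ (2 * k) * (k ! : ℝ) ^ 2) := by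
  refine (summable_geometric_of_lt_one (r := 1 / 4) (by norm_num) (by norm_num)).of_nonneg_of_le
    (fun _ => by positivity) fun k => ?_
  calc 1 / (2 ^ (2 * k) * (k ! : ℝ) ^ 2) ≤ 1 / 2 ^ (2 * k) :=
        one_div_le_one_div_of_le (by positivity)
          (le_mul_of_one_le_right (by positivity) (one_le_pow₀ (by exact_mod_cast k.factorial_pos)))
    _ = (1 / 4) ^ k := by rw [pow_mul, one_div_pow]; norm_num

lemma tsum_poisson_sq_le {t : ℝ≥0} (ht : (t : ℝ) ≤ 1 / 2) :
    ∑' n, (exp (-t) * t ^ n / n !) ^ 2 ≤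
      exp (-2 * t) * ∑' k : ℕ, 1 / (2 ^ (2 * k) * (k ! : ℝ) ^ 2) := by
  have term (n : ℕ) : (exp (-t) * t ^ n / n !) ^ 2 ≤
      exp (-2 * t) * (1 / (2 ^ (2 * n) * (n ! : ℝ) ^ 2)) := by
    have hexp : exp (-t) ^ 2 = exp (-2 * t) := by rw [sq, ← exp_add]; ring_nf
    calc (exp (-t) * t ^ n / n !) ^ 2 = exp (-2 * t) * ((t : ℝ) ^ n / n !) ^ 2 := by
          rw [← hexp]; ring
      _ ≤ exp (-2 * t) * ((1 / 2) ^ n / n !) ^ 2 := by gcongr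
      _ = exp (-2 * t) * (1 / (2 ^ (2 * n) * (n ! : ℝ) ^ 2)) := by
          rw [pow_mul', one_div_pow]; field_simp
  have hsum := summable_one_div_two_pow_mul_factorial_sq.mul_left (exp (-2 * t))
  rw [← tsum_mul_left]
  exact (hsum.of_nonneg_of_le (fun _ => by positivity) term).tsum_le_tsum term hsum

theorem PI_le_symm_poisson_value :
    sInf {r : ℝ | ∃ μ : Measure ℝ, IsProbabilityMeasure μ ∧ InfinitelyDivisible μ ∧
      Integrable (fun x => x ^ 2) μ ∧
      r = (μ {x : ℝ | |x - distMean μ| ≤ Real.sqrt (distVar μ)}).toReal} ≤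
      Real.exp (-1) * ∑' k : ℕ, 1 / (2 ^ (2 * k) * (Nat.factorial k : ℝ) ^ 2) := by
  set C := ∑' k : ℕ, 1 / (2 ^ (2 * k) * (Nat.factorial k : ℝ) ^ 2)
  have hlim : Tendsto (fun u : ℝ => exp (-2 * u) * C) (𝓝[<] (1 / 2)) (𝓝 (exp (-1) * C)) := by
    rw [show exp (-1) * C = exp (-2 * (1 / 2)) * C by norm_num]
    exact ((by fun_prop : Continuous fun u : ℝ => exp (-2 * u) * C).tendsto _).mono_left
      nhdsWithin_le_nhds
  refine ge_of_tendsto hlim ?_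
  filter_upwards [Ioo_mem_nhdsLT (by norm_num : (0 : ℝ) < 1 / 2)] with u ⟨hu0, hu⟩
  lift u to ℝ≥0 using hu0.le
  refine (csInf_le ?_ ?_).trans (tsum_poisson_sq_le hu.le)
  · exact ⟨0, by rintro _ ⟨μ, -, -, -, rfl⟩; exact ENNReal.toReal_nonneg⟩
  · exact ⟨symmPoisson u, inferInstance, infinitelyDivisible_symmPoisson u,
      (memLp_id_symmPoisson u).integrable_sq,
      (symmPoisson_abs_sub_distMean_le_sqrt_distVar hu).symm⟩
end

section
/- The function λ ↦ e^{−2λ} ∑_{k=0}^{∞} λ^{2k}/(k!)² is strictly decreasing on the interval (0, 1/2); equivalently, for independent Poisson random variables N_λ, N'_λ with parameter λ, the function λ ↦ P{N_λ − N'_λ = 0} is strictly decreasing for λ ∈ (0, 1/2). -/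
/-!
The mass of `symmPoissonMeasure λ` at `0` is `∑ₖ P{N_λ = k}² = e^{-2λ} S(λ)` with
`S(λ) = ∑ₖ λ^{2k}/(k!)²`, so its derivative is `e^{-2λ} (S'(λ) - 2 S(λ))`. Differentiating
termwise, the `0`-th term of `S'(λ)` vanishes and its `(k+1)`-st term is `λ/(k+1)` times the
`k`-th term of `2 S(λ)`, hence `S' < 2 S` and the function is strictly decreasing on all of
`[0, 1)`.
-/

open MeasureTheory Real ProbabilityTheory
open scoped NNReal

/-- The law of the difference of two independent Poisson random variables with
the same parameter `lam`. -/
noncomputable def symmPoissonMeasure (lam : ℝ≥0) : Measure ℤ :=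
  ((poissonMeasure lam).prod (poissonMeasure lam)).map
    (fun x : ℕ × ℕ => (x.1 : ℤ) - (x.2 : ℤ))

open Set
open scoped Nat

/-- `besselSeries x = I₀(2x)` for the modified Bessel function `I₀`. -/
noncomputable def besselSeries (x : ℝ) : ℝ := ∑' k : ℕ, x ^ (2 * k) / (k ! : ℝ) ^ 2

noncomputable def besselSeriesDeriv (x : ℝ) : ℝ :=
  ∑' k : ℕ, 2 * k * x ^ (2 * k - 1) / (k ! : ℝ) ^ 2

lemma factorial_le_factorial_sq (k : ℕ) : (k ! : ℝ) ≤ (k ! : ℝ) ^ 2 :=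
  le_self_pow₀ (Nat.one_le_cast.mpr k.factorial_pos) two_ne_zero

lemma summable_besselSeries (x : ℝ) :
    Summable fun k : ℕ => x ^ (2 * k) / (k ! : ℝ) ^ 2 := by
  refine (Real.summable_pow_div_factorial (x ^ 2)).of_nonneg_of_le
    (fun k => div_nonneg ((even_two_mul k).pow_nonneg x) (by positivity)) fun k => ?_
  rw [pow_mul]
  exact div_le_div_of_nonneg_left (pow_nonneg (sq_nonneg x) k) (by positivity)
    (factorial_le_factorial_sq k)

lemma summable_two_mul_div_factorial_sq :
    Summable fun k : ℕ => 2 * k / (k ! : ℝ) ^ 2 := by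
  refine ((Real.summable_pow_div_factorial 2).mul_left 2).of_nonneg_of_le
    (fun k => by positivity) fun k => ?_
  have hk : (k : ℝ) ≤ 2 ^ k := by exact_mod_cast k.lt_two_pow_self.le
  rw [mul_div_assoc]
  exact mul_le_mul_of_nonneg_left
    (div_le_div₀ (by positivity) hk (by positivity) (factorial_le_factorial_sq k)) zero_le_two

lemma norm_besselSeriesDeriv_term_le (k : ℕ) {y : ℝ} (hy : |y| ≤ 1) :
    ‖2 * k * y ^ (2 * k - 1) / (k ! : ℝ) ^ 2‖ ≤ 2 * k / (k ! : ℝ) ^ 2 := by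
  rw [Real.norm_eq_abs, abs_div, abs_mul, abs_pow,
    abs_of_nonneg (by positivity : (0 : ℝ) ≤ 2 * k),
    abs_of_nonneg (by positivity : (0 : ℝ) ≤ (k ! : ℝ) ^ 2)]
  exact div_le_div_of_nonneg_right
    (mul_le_of_le_one_right (by positivity) (pow_le_one₀ (abs_nonneg y) hy)) (by positivity)

lemma hasDerivAt_besselSeries {x : ℝ} (hx : x ∈ Ioo (-1 : ℝ) 1) :
    HasDerivAt besselSeries (besselSeriesDeriv x) x := by
  refine hasDerivAt_tsum_of_isPreconnected summable_two_mul_div_factorial_sq isOpen_Ioo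
    (convex_Ioo (-1 : ℝ) 1).isPreconnected (fun k y _ => ?_) (fun k y hy => ?_)
    (g := fun k z => z ^ (2 * k) / (k ! : ℝ) ^ 2)
    (g' := fun k z => 2 * k * z ^ (2 * k - 1) / (k ! : ℝ) ^ 2)
    (y₀ := 0) (by norm_num) (summable_besselSeries 0) hx
  · have h := (hasDerivAt_pow (2 * k) y).div_const ((k ! : ℝ) ^ 2)
    rwa [Nat.cast_mul, Nat.cast_ofNat] at h
  · exact norm_besselSeriesDeriv_term_le k (abs_le.mpr ⟨hy.1.le, hy.2.le⟩)

lemma besselSeriesDeriv_term_succ (k : ℕ) (x : ℝ) :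
    2 * ((k + 1 : ℕ) : ℝ) * x ^ (2 * (k + 1) - 1) / ((k + 1)! : ℝ) ^ 2
      = x / (k + 1) * (2 * (x ^ (2 * k) / (k ! : ℝ) ^ 2)) := by
  rw [Nat.factorial_succ, show 2 * (k + 1) - 1 = 2 * k + 1 by omega]
  push_cast
  field_simp
  ring

lemma besselSeriesDeriv_lt_two_mul {x : ℝ} (hx : x ∈ Ico (0 : ℝ) 1) :
    besselSeriesDeriv x < 2 * besselSeries x := by
  obtain ⟨hx0, hx1⟩ := hx
  have hsummable : Summable fun k : ℕ => 2 * k * x ^ (2 * k - 1) / (k ! : ℝ) ^ 2 :=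
    summable_two_mul_div_factorial_sq.of_norm_bounded
      fun k => norm_besselSeriesDeriv_term_le k (abs_le.mpr ⟨by linarith, hx1.le⟩)
  have hratio (k : ℕ) : x / (k + 1) ≤ 1 :=
    (div_le_one (by positivity)).mpr (by linarith [k.cast_nonneg (α := ℝ)])
  rw [besselSeriesDeriv, hsummable.tsum_eq_zero_add, besselSeries, ← tsum_mul_left]
  simp only [besselSeriesDeriv_term_succ, Nat.cast_zero, mul_zero, zero_mul, zero_div, zero_add]
  refine Summable.tsum_lt_tsum_of_nonneg (i := 0) (fun k => by positivity)
    (fun k => mul_le_of_le_one_left (by positivity) (hratio k)) ?_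
    ((summable_besselSeries x).mul_left 2)
  norm_num
  linarith

lemma hasDerivAt_exp_mul_besselSeries {x : ℝ} (hx : x ∈ Ioo (-1 : ℝ) 1) :
    HasDerivAt (fun y => Real.exp (-2 * y) * besselSeries y)
      (Real.exp (-2 * x) * (besselSeriesDeriv x - 2 * besselSeries x)) x := by
  have hexp : HasDerivAt (fun y => Real.exp (-2 * y)) (Real.exp (-2 * x) * -2) x :=
    ((hasDerivAt_id' x).const_mul (-2)).exp.congr_deriv (by ring)
  exact (hexp.mul (hasDerivAt_besselSeries hx)).congr_deriv (by ring)

lemma strictAntiOn_exp_mul_besselSeries :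
    StrictAntiOn (fun x => Real.exp (-2 * x) * besselSeries x) (Ico 0 1) := by
  have hsub : Ico (0 : ℝ) 1 ⊆ Ioo (-1) 1 := fun y hy => ⟨by linarith [hy.1], hy.2⟩
  refine strictAntiOn_of_deriv_neg (convex_Ico 0 1)
    (fun y hy => (hasDerivAt_exp_mul_besselSeries (hsub hy)).continuousAt.continuousWithinAt)
    fun y hy => ?_
  rw [interior_Ico] at hy
  rw [(hasDerivAt_exp_mul_besselSeries (hsub (Ioo_subset_Ico_self hy))).deriv]
  exact mul_neg_of_pos_of_neg (Real.exp_pos _)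
    (sub_neg.mpr (besselSeriesDeriv_lt_two_mul (Ioo_subset_Ico_self hy)))

lemma prod_apply_diagonal {α : Type*} [MeasurableSpace α] [Countable α]
    [MeasurableSingletonClass α] (μ ν : Measure α) [SFinite ν] :
    μ.prod ν {p | p.1 = p.2} = ∑' a, ν {a} * μ {a} := by
  rw [Measure.prod_apply (to_countable _).measurableSet, lintegral_countable']
  congr! with a
  ext b
  simp [eq_comm]

lemma symmPoissonMeasure_singleton_zero (lam : ℝ≥0) :
    symmPoissonMeasure lam {0} = ∑' n, poissonMeasure lam {n} * poissonMeasure lam {n} := by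
  rw [symmPoissonMeasure, Measure.map_apply (measurable_of_countable _) (measurableSet_singleton 0),
    ← prod_apply_diagonal]
  congr 1
  ext ⟨a, b⟩
  simp [sub_eq_zero]

lemma symmPoissonMeasure_singleton_zero_toReal (lam : ℝ≥0) :
    (symmPoissonMeasure lam {0}).toReal = Real.exp (-2 * lam) * besselSeries lam := by
  rw [symmPoissonMeasure_singleton_zero,
    ENNReal.tsum_toReal_eq fun n => ENNReal.mul_ne_top (measure_ne_top _ _) (measure_ne_top _ _),
    besselSeries, ← tsum_mul_left]
  congr 1 with n
  rw [ENNReal.toReal_mul, ← measureReal_def, poissonMeasure_real_singleton, pow_mul',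
    show -2 * (lam : ℝ) = -lam + -lam by ring, Real.exp_add]
  ring

theorem symm_poisson_pmf_zero_strictAnti :
    StrictAntiOn
      (fun lam : ℝ => Real.exp (-2 * lam) *
        ∑' k : ℕ, lam ^ (2 * k) / (Nat.factorial k : ℝ) ^ 2)
      (Set.Ioo 0 (1 / 2)) ∧
    StrictAntiOn
      (fun lam : ℝ≥0 => (symmPoissonMeasure lam {(0 : ℤ)}).toReal)
      (Set.Ioo 0 (1 / 2)) := by
  have hreal : StrictAntiOn (fun x => Real.exp (-2 * x) * besselSeries x) (Ioo 0 (1 / 2)) :=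
    strictAntiOn_exp_mul_besselSeries.mono fun x hx => ⟨hx.1.le, by linarith [hx.2]⟩
  refine ⟨hreal, ?_⟩
  simp only [symmPoissonMeasure_singleton_zero_toReal]
  refine hreal.comp_strictMonoOn (f := ((↑) : ℝ≥0 → ℝ))
    (fun _ _ _ _ => NNReal.coe_lt_coe.mpr) fun x hx => ⟨hx.1, ?_⟩
  exact_mod_cast hx.2
end
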